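/- arXiv:2408.01359 — 2 statements merged into one kernel-verified Lean document; each statement's English description precedes it below -/
import Mathlib

section
/- Let 0 → A → B → C → 0, with maps f : A → B and g : B → C, be an almost split conflation in C. Let 0 → A → I → W → 0, with maps e : A → I and c : I → W, be a conflation of C such that I is C-injective and e is an injective envelope in C (i.e., every endomorphism φ : I → I with φ ∘ e = e is an automorphism). Let e′ : B → I be a map with e′ ∘ f = e (such e′ exists since I is C-injective and f is an inflation of C), and let d : I ⊕ C → W be the map whose restriction to I is c and whose restriction to C is the unique map d₂ : C → W with d₂ ∘ g = −c ∘ e′ (which exists since c ∘ e′ ∘ f = c ∘ e = 0). Then the sequence 0 → (c : I → W) → (d : I ⊕ C → W) → (C → 0) → 0 in the epimorphism category F(C), whose first map is the arrow morphism (inl, 𝟙_W) and whose second map is the arrow morphism ([0,1], 0), is an almost split conflation in F(C). -/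
open CategoryTheory CategoryTheory.Limits

universe u

section Defs
variable {Λ : Type u} [Ring Λ]

/-- A short exact sequence `0 → X → Y → Z → 0` of Λ-modules. -/
def ShortExactSeq {X Y Z : ModuleCat.{u} Λ} (f : X ⟶ Y) (g : Y ⟶ Z) : Prop :=
  Function.Injective f ∧ Function.Surjective g ∧ Function.Exact f g

variable (C : Set (ModuleCat.{u} Λ))

/-- An inflation of the exact category `C`: an injective map between objects of `C`
whose cokernel lies in `C`. -/
def IsInflation {X Y : ModuleCat.{u} Λ} (f : X ⟶ Y) : Prop :=
  X ∈ C ∧ Y ∈ C ∧ Function.Injective f ∧ ∃ Z ∈ C, ∃ g : Y ⟶ Z, ShortExactSeq f g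

/-- A deflation of the exact category `C`: a surjective map between objects of `C`
whose kernel lies in `C`. -/
def IsDeflation {X Y : ModuleCat.{u} Λ} (f : X ⟶ Y) : Prop :=
  X ∈ C ∧ Y ∈ C ∧ Function.Surjective f ∧ ∃ Z ∈ C, ∃ g : Z ⟶ X, ShortExactSeq g f

/-- The monomorphism category `S(C)`, as a subcategory of the arrow category. -/
def SMono : Set (Arrow (ModuleCat.{u} Λ)) := {a | IsInflation C a.hom}

/-- The epimorphism category `F(C)`, as a subcategory of the arrow category. -/
def FEpi : Set (Arrow (ModuleCat.{u} Λ)) := {a | IsDeflation C a.hom}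

/-- `I` is a `C`-injective object. -/
def CInjective (I : ModuleCat.{u} Λ) : Prop :=
  I ∈ C ∧ ∀ (U V : ModuleCat.{u} Λ), U ∈ C → V ∈ C →
    ∀ (f : I ⟶ U) (g : U ⟶ V), ShortExactSeq f g → ∃ r : U ⟶ I, f ≫ r = 𝟙 I

/-- `P` is a `C`-projective object. -/
def CProjective (P : ModuleCat.{u} Λ) : Prop :=
  P ∈ C ∧ ∀ (U V : ModuleCat.{u} Λ), U ∈ C → V ∈ C →
    ∀ (f : U ⟶ V) (g : V ⟶ P), ShortExactSeq f g → ∃ s : P ⟶ V, s ≫ g = 𝟙 P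

/-- `C` has enough `C`-injectives. -/
def EnoughCInjectives : Prop :=
  ∀ X ∈ C, ∃ (I X' : ModuleCat.{u} Λ), CInjective C I ∧ X' ∈ C ∧
    ∃ (e : X ⟶ I) (q : I ⟶ X'), ShortExactSeq e q

/-- `C` has enough `C`-projectives. -/
def EnoughCProjectives : Prop :=
  ∀ X ∈ C, ∃ (P X' : ModuleCat.{u} Λ), CProjective C P ∧ X' ∈ C ∧
    ∃ (q : X' ⟶ P) (p : P ⟶ X), ShortExactSeq q p

def ClosedUnderIso : Prop := ∀ (M N : ModuleCat.{u} Λ), (M ≅ N) → M ∈ C → N ∈ C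
def ContainsZero : Prop := ∀ M : ModuleCat.{u} Λ, Subsingleton M → M ∈ C
def ClosedUnderSums : Prop := ∀ M N : ModuleCat.{u} Λ, M ∈ C → N ∈ C → (M ⊞ N) ∈ C
def ClosedUnderExtensions : Prop :=
  ∀ (X Y Z : ModuleCat.{u} Λ) (f : X ⟶ Y) (g : Y ⟶ Z),
    X ∈ C → Z ∈ C → ShortExactSeq f g → Y ∈ C

end Defs

section Approx
variable {A : Type*} [Category A] (D : Set A)

/-- `g : Y ⟶ Z` is a right `D`-approximation of `Z`. -/
def IsRightApprox {Y Z : A} (g : Y ⟶ Z) : Prop :=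
  Y ∈ D ∧ ∀ W ∈ D, ∀ u : W ⟶ Z, ∃ v : W ⟶ Y, v ≫ g = u

/-- `g : Z ⟶ Y` is a left `D`-approximation of `Z`. -/
def IsLeftApprox {Z Y : A} (g : Z ⟶ Y) : Prop :=
  Y ∈ D ∧ ∀ W ∈ D, ∀ u : Z ⟶ W, ∃ v : Y ⟶ W, g ≫ v = u

end Approx

section Finiteness
variable {Λ : Type u} [Ring Λ]

/-- Contravariant finiteness of `C` in `mod Λ` (the finite-dimensional Λ-modules). -/
def ContravariantlyFinite (C : Set (ModuleCat.{u} Λ)) : Prop :=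
  ∀ M : ModuleCat.{u} Λ, Module.Finite Λ M →
    ∃ (Y : ModuleCat.{u} Λ) (g : Y ⟶ M), IsRightApprox C g

/-- Covariant finiteness of `C` in `mod Λ`. -/
def CovariantlyFinite (C : Set (ModuleCat.{u} Λ)) : Prop :=
  ∀ M : ModuleCat.{u} Λ, Module.Finite Λ M →
    ∃ (Y : ModuleCat.{u} Λ) (g : M ⟶ Y), IsLeftApprox C g

end Finiteness

section ArrowAS
variable {Λ : Type u} [Ring Λ]
variable (D : Set (Arrow (ModuleCat.{u} Λ)))

/-- A conflation of the full subcategory `D` of the arrow category. -/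
def ArrowConflation {a b c : Arrow (ModuleCat.{u} Λ)} (φ : a ⟶ b) (ψ : b ⟶ c) : Prop :=
  a ∈ D ∧ b ∈ D ∧ c ∈ D ∧ ShortExactSeq φ.left ψ.left ∧ ShortExactSeq φ.right ψ.right

/-- `φ : a ⟶ b` is left almost split in `D`. -/
def ArrowLeftAlmostSplit {a b : Arrow (ModuleCat.{u} Λ)} (φ : a ⟶ b) : Prop :=
  (¬ ∃ r : b ⟶ a, φ ≫ r = 𝟙 a) ∧
  ∀ b' ∈ D, ∀ u : a ⟶ b', (¬ ∃ r : b' ⟶ a, u ≫ r = 𝟙 a) → ∃ v : b ⟶ b', φ ≫ v = u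

/-- `ψ : b ⟶ c` is right almost split in `D`. -/
def ArrowRightAlmostSplit {b c : Arrow (ModuleCat.{u} Λ)} (ψ : b ⟶ c) : Prop :=
  (¬ ∃ s : c ⟶ b, s ≫ ψ = 𝟙 c) ∧
  ∀ b' ∈ D, ∀ u : b' ⟶ c, (¬ ∃ s : c ⟶ b', s ≫ u = 𝟙 c) → ∃ v : b' ⟶ b, v ≫ ψ = u

/-- An almost split conflation in `D`. -/
def ArrowAlmostSplitConflation {a b c : Arrow (ModuleCat.{u} Λ)} (φ : a ⟶ b) (ψ : b ⟶ c) :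
    Prop :=
  ArrowConflation D φ ψ ∧ (¬ ∃ r : b ⟶ a, φ ≫ r = 𝟙 a) ∧
    ArrowLeftAlmostSplit D φ ∧ ArrowRightAlmostSplit D ψ

end ArrowAS

section ModAS
variable {Λ : Type u} [Ring Λ] (C : Set (ModuleCat.{u} Λ))

/-- `f : X ⟶ Y` is left almost split in `C`. -/
def ModLeftAlmostSplit {X Y : ModuleCat.{u} Λ} (f : X ⟶ Y) : Prop :=
  (¬ ∃ r : Y ⟶ X, f ≫ r = 𝟙 X) ∧
  ∀ Y' ∈ C, ∀ u : X ⟶ Y', (¬ ∃ r : Y' ⟶ X, u ≫ r = 𝟙 X) → ∃ v : Y ⟶ Y', f ≫ v = u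

/-- `g : Y ⟶ Z` is right almost split in `C`. -/
def ModRightAlmostSplit {Y Z : ModuleCat.{u} Λ} (g : Y ⟶ Z) : Prop :=
  (¬ ∃ s : Z ⟶ Y, s ≫ g = 𝟙 Z) ∧
  ∀ Y' ∈ C, ∀ u : Y' ⟶ Z, (¬ ∃ s : Z ⟶ Y', s ≫ u = 𝟙 Z) → ∃ v : Y' ⟶ Y, v ≫ g = u

/-- An almost split conflation `0 → X → Y → Z → 0` in `C`. -/
def ModAlmostSplitSeq {X Y Z : ModuleCat.{u} Λ} (f : X ⟶ Y) (g : Y ⟶ Z) : Prop :=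
  X ∈ C ∧ Y ∈ C ∧ Z ∈ C ∧ ShortExactSeq f g ∧ (¬ ∃ r : Y ⟶ X, f ≫ r = 𝟙 X) ∧
    ModLeftAlmostSplit C f ∧ ModRightAlmostSplit C g

end ModAS

/-!
The first components of the sequence form the split sequence `I → I ⊞ Z → Z`, the second ones
`W = W → 0`, and `(e', g) : B → I ⊞ Z` is a kernel of `d = [c, d₂]`, so all three arrows lie in
`F(C)`. A retraction of the first map, or a section of the second, would give `σ : Z → I` with
`σ ≫ c = d₂`; then `e' + g ≫ σ` factors through `e` and yields a retraction of `f`.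

For left almost splitness, let `u` map `c` to a deflation `x : X → Y` with kernel `κ : K → X`;
it restricts to `ub : A → K`. If `ub` is a split mono, extending its retraction along `κ`
(possible since `I` is `C`-injective) gives `ρ : X → I` with `e ≫ u.left ≫ ρ = e`, so
`u.left ≫ ρ` is invertible as `e` is an injective envelope, and `u` splits. Otherwise `ub`
factors through `f` and the factorization descends along `g`. For right almost splitness,
`κ ≫ u.left : K → Z` is not a split epi, so it factors through `g`, and `C`-injectivity of `I`
provides the missing component `X → I`.
-/

namespace ShortExactSeq

variable {Λ : Type u} [Ring Λ] {X Y Z : ModuleCat.{u} Λ} {f : X ⟶ Y} {g : Y ⟶ Z}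

lemma comp_eq_zero (h : ShortExactSeq f g) : f ≫ g = 0 :=
  ModuleCat.hom_ext h.2.2.linearMap_comp_eq_zero

lemma shortExact (h : ShortExactSeq f g) : (ShortComplex.mk f g h.comp_eq_zero).ShortExact :=
  ModuleCat.shortComplex_shortExact _ h.2.2 h.1 h.2.1

lemma of_shortExact {S : ShortComplex (ModuleCat.{u} Λ)} (hS : S.ShortExact) :
    ShortExactSeq S.f S.g :=
  ⟨hS.injective_f, hS.surjective_g,
    (ShortComplex.ShortExact.moduleCat_exact_iff_function_exact S).1 hS.exact⟩

lemma mono (h : ShortExactSeq f g) : Mono f := h.shortExact.mono_f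

lemma epi (h : ShortExactSeq f g) : Epi g := h.shortExact.epi_g

lemma exists_lift (h : ShortExactSeq f g) {T : ModuleCat.{u} Λ} (t : T ⟶ Y) (ht : t ≫ g = 0) :
    ∃ t' : T ⟶ X, t' ≫ f = t :=
  have := h.mono
  ⟨_, h.shortExact.exact.lift_f t ht⟩

lemma exists_desc (h : ShortExactSeq f g) {T : ModuleCat.{u} Λ} (t : Y ⟶ T) (ht : f ≫ t = 0) :
    ∃ t' : Z ⟶ T, g ≫ t' = t :=
  have := h.epi
  ⟨_, h.shortExact.exact.g_desc t ht⟩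

end ShortExactSeq

lemma shortExactSeq_id_zero {Λ : Type u} [Ring Λ] (X T : ModuleCat.{u} Λ) [Subsingleton T] :
    ShortExactSeq (𝟙 X) (0 : X ⟶ T) :=
  ⟨Function.injective_id, fun _ => ⟨0, Subsingleton.elim _ _⟩,
    fun x => ⟨fun _ => ⟨x, rfl⟩, fun _ => Subsingleton.elim _ _⟩⟩

section Abelian

variable {𝒜 : Type*} [Category 𝒜] [Abelian 𝒜]

lemma shortExact_pushout {K X Y I : 𝒜} {κ : K ⟶ X} {x : X ⟶ Y} {w : κ ≫ x = 0}
    (h : (ShortComplex.mk κ x w).ShortExact) (m : K ⟶ I) :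
    (ShortComplex.mk (pushout.inr κ m) (pushout.desc x 0 (by rw [w, comp_zero]))
      (pushout.inr_desc _ _ _)).ShortExact := by
  have := h.mono_f
  have := h.epi_g
  refine { exact := ?_, mono_f := ?_, epi_g := ?_ }
  · rw [ShortComplex.exact_iff_exact_up_to_refinements]
    intro T y hy
    obtain ⟨T₁, π₁, _, x₂, x₃, hπ₁⟩ :=
      (IsPushout.of_hasPushout κ m).hom_eq_add_up_to_refinements y
    have hx₂ : x₂ ≫ x = 0 := by
      have := hπ₁ =≫ pushout.desc x 0 (by rw [w, comp_zero])
      rw [Preadditive.add_comp, Category.assoc, Category.assoc, Category.assoc,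
        pushout.inl_desc, pushout.inr_desc] at this
      simpa [hy] using this.symm
    obtain ⟨T₂, π₂, _, k, hπ₂⟩ := h.exact.exact_up_to_refinements x₂ hx₂
    refine ⟨T₂, π₂ ≫ π₁, inferInstance, k ≫ m + π₂ ≫ x₃, ?_⟩
    calc (π₂ ≫ π₁) ≫ y = π₂ ≫ x₂ ≫ pushout.inl κ m + π₂ ≫ x₃ ≫ pushout.inr κ m := by
          rw [Category.assoc, hπ₁, Preadditive.comp_add]
      _ = _ := by
          rw [reassoc_of% hπ₂, pushout.condition, Preadditive.add_comp, Category.assoc,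
            Category.assoc]
  · infer_instance
  · exact epi_of_epi_fac (pushout.inl_desc x 0 _)

lemma shortExact_biprod_lift_desc {A B Z I W : 𝒜} {f : A ⟶ B} {g : B ⟶ Z} {e : A ⟶ I}
    {c : I ⟶ W} {w₁ : f ≫ g = 0} {w₂ : e ≫ c = 0}
    (h₁ : (ShortComplex.mk f g w₁).ShortExact) (h₂ : (ShortComplex.mk e c w₂).ShortExact)
    {e' : B ⟶ I} (he' : f ≫ e' = e) {d₂ : Z ⟶ W} (hd₂ : g ≫ d₂ = -(e' ≫ c)) :
    (ShortComplex.mk (biprod.lift e' g) (biprod.desc c d₂)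
      (by rw [biprod.lift_desc, hd₂, add_neg_cancel])).ShortExact := by
  have := h₁.mono_f
  have := h₁.epi_g
  have := h₂.mono_f
  have := h₂.epi_g
  refine { exact := ?_, mono_f := ?_, epi_g := ?_ }
  · rw [ShortComplex.exact_iff_exact_up_to_refinements]
    intro T y (hy : y ≫ biprod.desc c d₂ = 0)
    obtain ⟨T', π, _, b, hb⟩ := surjective_up_to_refinements_of_epi g (y ≫ biprod.snd)
    have hc : (π ≫ y ≫ biprod.fst - b ≫ e') ≫ c = 0 :=
      calc (π ≫ y ≫ biprod.fst - b ≫ e') ≫ c = π ≫ y ≫ biprod.fst ≫ c + b ≫ g ≫ d₂ := by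
            simp [hd₂, sub_eq_add_neg]
        _ = π ≫ y ≫ biprod.desc c d₂ := by simp [← reassoc_of% hb, biprod.desc_eq]
        _ = 0 := by rw [hy, comp_zero]
    obtain ⟨a, ha⟩ : ∃ a, a ≫ e = π ≫ y ≫ biprod.fst - b ≫ e' := ⟨_, h₂.exact.lift_f _ hc⟩
    refine ⟨T', π, inferInstance, b + a ≫ f, ?_⟩
    apply biprod.hom_ext
    · simp [he', ha]
    · simp [hb, w₁]
  · rw [Preadditive.mono_iff_cancel_zero]
    intro T t (ht : t ≫ biprod.lift e' g = 0)
    obtain ⟨s, hs⟩ : ∃ s, s ≫ f = t := ⟨_, h₁.exact.lift_f t (by simpa using ht =≫ biprod.snd)⟩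
    have hse : s ≫ e = 0 := by simpa [← he', reassoc_of% hs] using ht =≫ biprod.fst
    rw [← hs, zero_of_comp_mono e hse, zero_comp]
  · exact epi_of_epi_fac (biprod.inl_desc c d₂)

lemma not_exists_lift_of_not_exists_retraction {A B Z I W : 𝒜} {f : A ⟶ B} {g : B ⟶ Z}
    {e : A ⟶ I} {c : I ⟶ W} {w₂ : e ≫ c = 0}
    (h₂ : (ShortComplex.mk e c w₂).ShortExact) (hfg : f ≫ g = 0)
    {e' : B ⟶ I} (he' : f ≫ e' = e) {d₂ : Z ⟶ W} (hd₂ : g ≫ d₂ = -(e' ≫ c))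
    (hf : ¬ ∃ r : B ⟶ A, f ≫ r = 𝟙 A) : ¬ ∃ σ : Z ⟶ I, σ ≫ c = d₂ := by
  rintro ⟨σ, hσ⟩
  have := h₂.mono_f
  obtain ⟨t, ht⟩ : ∃ t, t ≫ e = e' + g ≫ σ :=
    ⟨_, h₂.exact.lift_f _ (by simp [hσ, hd₂])⟩
  refine hf ⟨t, ?_⟩
  rw [← cancel_mono e, Category.assoc, ht, Preadditive.comp_add, he', reassoc_of% hfg,
    zero_comp, add_zero, Category.id_comp]

end Abelian

section

variable {Λ : Type u} [Ring Λ] {C : Set (ModuleCat.{u} Λ)}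

lemma CInjective.exists_extension (hCext : ClosedUnderExtensions C)
    {I K X Y : ModuleCat.{u} Λ} (hI : CInjective C I) (hY : Y ∈ C)
    {κ : K ⟶ X} {x : X ⟶ Y} (h : ShortExactSeq κ x) (m : K ⟶ I) :
    ∃ w : X ⟶ I, κ ≫ w = m := by
  -- the pushout along `m` is an extension of `Y` by `I`, so it lies in `C` and `I` splits off
  have hP := ShortExactSeq.of_shortExact (shortExact_pushout h.shortExact m)
  obtain ⟨r, hr⟩ := hI.2 _ Y (hCext _ _ _ _ _ hI.1 hY hP) hY _ _ hP
  exact ⟨pushout.inl κ m ≫ r, by rw [pushout.condition_assoc, hr, Category.comp_id]⟩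

lemma mem_fEpi_of_shortExactSeq {K X Y : ModuleCat.{u} Λ} {κ : K ⟶ X} {x : X ⟶ Y}
    (hK : K ∈ C) (hX : X ∈ C) (hY : Y ∈ C) (h : ShortExactSeq κ x) : Arrow.mk x ∈ FEpi C :=
  ⟨hX, hY, h.2.1, K, hK, κ, h⟩

noncomputable abbrev arrowHomInl {I Z W : ModuleCat.{u} Λ} (c : I ⟶ W) (d₂ : Z ⟶ W) :
    Arrow.mk c ⟶ Arrow.mk (biprod.desc c d₂) :=
  Arrow.homMk (u := biprod.inl) (v := 𝟙 W) (by simp)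

noncomputable abbrev arrowHomSnd {I Z W : ModuleCat.{u} Λ} (c : I ⟶ W) (d₂ : Z ⟶ W) :
    Arrow.mk (biprod.desc c d₂) ⟶ Arrow.mk (0 : Z ⟶ ModuleCat.of Λ PUnit.{u+1}) :=
  Arrow.homMk (u := biprod.snd) (v := 0) (by simp)

variable {A B Z I W : ModuleCat.{u} Λ} {f : A ⟶ B} {g : B ⟶ Z} {e : A ⟶ I} {c : I ⟶ W}
  {e' : B ⟶ I} {d₂ : Z ⟶ W}

lemma not_exists_retraction_arrowHomInl (hec : ShortExactSeq e c) (hfg : f ≫ g = 0)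
    (he' : f ≫ e' = e) (hd₂ : g ≫ d₂ = -(e' ≫ c)) (hf : ¬ ∃ r : B ⟶ A, f ≫ r = 𝟙 A) :
    ¬ ∃ r, arrowHomInl c d₂ ≫ r = 𝟙 _ := by
  rintro ⟨r, hr⟩
  have hr₂ : r.right = 𝟙 W := by simpa using congrArg CommaMorphism.right hr
  have hrw : r.left ≫ c = biprod.desc c d₂ ≫ r.right := r.w
  refine not_exists_lift_of_not_exists_retraction hec.shortExact hfg he' hd₂ hf
    ⟨biprod.inr ≫ r.left, ?_⟩
  rw [Category.assoc, hrw, hr₂, Category.comp_id, biprod.inr_desc]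

lemma not_exists_section_arrowHomSnd (hec : ShortExactSeq e c) (hfg : f ≫ g = 0)
    (he' : f ≫ e' = e) (hd₂ : g ≫ d₂ = -(e' ≫ c)) (hf : ¬ ∃ r : B ⟶ A, f ≫ r = 𝟙 A) :
    ¬ ∃ s, s ≫ arrowHomSnd c d₂ = 𝟙 _ := by
  rintro ⟨s, hs⟩
  obtain ⟨σ, hσ₂, hσ⟩ : ∃ σ : Z ⟶ I ⊞ Z, σ ≫ biprod.snd = 𝟙 Z ∧ σ ≫ biprod.desc c d₂ = 0 :=
    ⟨s.left, by simpa using congrArg CommaMorphism.left hs, by simp⟩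
  refine not_exists_lift_of_not_exists_retraction hec.shortExact hfg he' hd₂ hf
    ⟨-(σ ≫ biprod.fst), ?_⟩
  rw [biprod.desc_eq, Preadditive.comp_add, reassoc_of% hσ₂, ← Category.assoc,
    add_eq_zero_iff_eq_neg] at hσ
  rw [Preadditive.neg_comp, hσ, neg_neg]

lemma exists_retraction_of_splitMono_restriction (hCext : ClosedUnderExtensions C)
    (hI : CInjective C I) (hec : ShortExactSeq e c) (henv : ∀ φ : I ⟶ I, e ≫ φ = e → IsIso φ)
    {b' : Arrow (ModuleCat.{u} Λ)} (hY : b'.right ∈ C) {K : ModuleCat.{u} Λ} {κ : K ⟶ b'.left}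
    (hκx : ShortExactSeq κ b'.hom) (u : Arrow.mk c ⟶ b') {ub : A ⟶ K}
    (hub : ub ≫ κ = e ≫ u.left) {p : K ⟶ A} (hp : ub ≫ p = 𝟙 A) :
    ∃ r : b' ⟶ Arrow.mk c, u ≫ r = 𝟙 _ := by
  obtain ⟨ρ, hρ⟩ := hI.exists_extension hCext hY hκx (p ≫ e)
  have heφ : e ≫ u.left ≫ ρ = e := by rw [← reassoc_of% hub, hρ, reassoc_of% hp]
  have := henv _ heφ
  have he : e ≫ inv (u.left ≫ ρ) = e := (IsIso.comp_inv_eq _).2 heφ.symm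
  have hr₁ : u.left ≫ ρ ≫ inv (u.left ≫ ρ) = 𝟙 I :=
    (Category.assoc _ _ _).symm.trans (IsIso.hom_inv_id _)
  obtain ⟨r₂, hr₂⟩ := hκx.exists_desc ((ρ ≫ inv (u.left ≫ ρ)) ≫ c) (by
    rw [← Category.assoc, ← Category.assoc, hρ, Category.assoc, Category.assoc, reassoc_of% he,
      hec.comp_eq_zero, comp_zero])
  have huw : u.left ≫ b'.hom = c ≫ u.right := u.w
  have := hec.epi
  have hr₂' : u.right ≫ r₂ = 𝟙 W := by
    rw [← cancel_epi c, ← reassoc_of% huw, hr₂, ← Category.assoc, hr₁]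
    simp
  exact ⟨Arrow.homMk _ _ hr₂.symm, Arrow.hom_ext _ _ hr₁ hr₂'⟩

lemma exists_comp_arrowHomInl_eq (hfg : ShortExactSeq f g) (he' : f ≫ e' = e)
    (hd₂ : g ≫ d₂ = -(e' ≫ c)) {b' : Arrow (ModuleCat.{u} Λ)} {K : ModuleCat.{u} Λ}
    {κ : K ⟶ b'.left} (hκ : κ ≫ b'.hom = 0) (u : Arrow.mk c ⟶ b') {t : B ⟶ K}
    (ht : f ≫ t ≫ κ = e ≫ u.left) :
    ∃ v, arrowHomInl c d₂ ≫ v = u := by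
  obtain ⟨w, hw⟩ := hfg.exists_desc (t ≫ κ - e' ≫ u.left) (by
    rw [Preadditive.comp_sub, ht, reassoc_of% he', sub_self])
  have huw : u.left ≫ b'.hom = c ≫ u.right := u.w
  have := hfg.epi
  have hwx : w ≫ b'.hom = d₂ ≫ u.right := by
    rw [← cancel_epi g, reassoc_of% hw, reassoc_of% hd₂]
    simp [hκ]
  refine ⟨Arrow.homMk (biprod.desc u.left w) u.right ?_,
    Arrow.hom_ext _ _ (biprod.inl_desc _ _) (Category.id_comp _)⟩
  apply biprod.hom_ext' <;> simp [hwx]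

lemma arrowLeftAlmostSplit_arrowHomInl (hCext : ClosedUnderExtensions C)
    (hfg : ShortExactSeq f g) (hf : ModLeftAlmostSplit C f)
    (hI : CInjective C I) (hec : ShortExactSeq e c) (henv : ∀ φ : I ⟶ I, e ≫ φ = e → IsIso φ)
    (he' : f ≫ e' = e) (hd₂ : g ≫ d₂ = -(e' ≫ c)) :
    ArrowLeftAlmostSplit (FEpi C) (arrowHomInl c d₂) := by
  refine ⟨not_exists_retraction_arrowHomInl hec hfg.comp_eq_zero he' hd₂ hf.1,
    fun b' hb' u hu => ?_⟩
  obtain ⟨-, hY, -, K, hK, κ, hκx⟩ := hb'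
  obtain ⟨ub, hub⟩ := hκx.exists_lift (e ≫ u.left) (by
    rw [Category.assoc, u.w]
    simp [reassoc_of% hec.comp_eq_zero])
  by_cases hsplit : ∃ p, ub ≫ p = 𝟙 A
  · obtain ⟨p, hp⟩ := hsplit
    exact absurd (exists_retraction_of_splitMono_restriction hCext hI hec henv hY hκx u hub hp) hu
  · obtain ⟨t, ht⟩ := hf.2 K hK ub hsplit
    exact exists_comp_arrowHomInl_eq hfg he' hd₂ hκx.comp_eq_zero u (by rw [reassoc_of% ht, hub])

lemma arrowRightAlmostSplit_arrowHomSnd (hCext : ClosedUnderExtensions C)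
    (hfg : f ≫ g = 0) (hf : ¬ ∃ r : B ⟶ A, f ≫ r = 𝟙 A) (hg : ModRightAlmostSplit C g)
    (hI : CInjective C I) (hec : ShortExactSeq e c)
    (he' : f ≫ e' = e) (hd₂ : g ≫ d₂ = -(e' ≫ c)) :
    ArrowRightAlmostSplit (FEpi C) (arrowHomSnd c d₂) := by
  refine ⟨not_exists_section_arrowHomSnd hec hfg he' hd₂ hf, fun b' hb' u hu => ?_⟩
  obtain ⟨-, hY, -, K, hK, κ, hκx⟩ := hb'
  have hzero := ModuleCat.isZero_of_subsingleton (ModuleCat.of Λ PUnit.{u+1})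
  obtain ⟨q, hq⟩ := hg.2 K hK (κ ≫ u.left) (fun ⟨s, hs⟩ => hu
    ⟨Arrow.homMk (s ≫ κ) 0 (by simp [hκx.comp_eq_zero]),
      Arrow.hom_ext _ _ (by simpa using hs) (hzero.eq_of_tgt _ _)⟩)
  obtain ⟨w, hw⟩ := hI.exists_extension hCext hY hκx (q ≫ e')
  obtain ⟨v₂, hv₂⟩ := hκx.exists_desc (w ≫ c + u.left ≫ d₂) (by
    rw [Preadditive.comp_add, reassoc_of% hw, ← reassoc_of% hq, hd₂, Preadditive.comp_neg,
      add_neg_cancel])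
  exact ⟨Arrow.homMk (biprod.lift w u.left) v₂ (by simp [hv₂]),
    Arrow.hom_ext _ _ (biprod.lift_snd _ _) (hzero.eq_of_tgt _ _)⟩

end

/-- If `0 → A →f B →g Z → 0` is an almost split conflation in `C`,
`0 → A →e I →c W → 0` is a conflation with `I` `C`-injective and `e` an injective envelope,
`e′ : B → I` extends `e` and `d₂ : Z → W` is the map with `d₂ ∘ g = −c ∘ e′`, then
`0 → (c : I → W) → (d : I ⊕ Z → W) → (Z → 0) → 0`, with `d = [c, d₂]`, is an almost
split conflation in `F(C)`. -/
theorem almost_split_fepi_ending_at_arrow_to_zero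
    (Λ : Type u) [Ring Λ]
    (C : Set (ModuleCat.{u} Λ))
    (hC0 : ContainsZero C)
    (hCsum : ClosedUnderSums C) (hCext : ClosedUnderExtensions C)
    {A B Z I W : ModuleCat.{u} Λ} (f : A ⟶ B) (g : B ⟶ Z)
    (h : ModAlmostSplitSeq C f g)
    (e : A ⟶ I) (c : I ⟶ W) (hI : CInjective C I) (hW : W ∈ C)
    (hec : ShortExactSeq e c)
    (henv : ∀ φ : I ⟶ I, e ≫ φ = e → IsIso φ)
    (e' : B ⟶ I) (he' : f ≫ e' = e)
    (d₂ : Z ⟶ W) (hd₂ : g ≫ d₂ = -(e' ≫ c)) :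
    ArrowAlmostSplitConflation (FEpi C)
      (a := Arrow.mk c)
      (b := Arrow.mk (biprod.desc c d₂))
      (c := Arrow.mk (0 : Z ⟶ ModuleCat.of Λ PUnit.{u+1}))
      (Arrow.homMk (u := biprod.inl) (v := 𝟙 W) (by simp))
      (Arrow.homMk (u := biprod.snd) (v := 0) (by simp)) := by
  obtain ⟨hA, hB, hZ, hfg, hf, hfl, hgr⟩ := h
  have hd : ShortExactSeq (biprod.lift e' g) (biprod.desc c d₂) :=
    .of_shortExact (shortExact_biprod_lift_desc hfg.shortExact hec.shortExact he' hd₂)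
  have hconfl : ArrowConflation (FEpi C) (arrowHomInl c d₂) (arrowHomSnd c d₂) :=
    ⟨mem_fEpi_of_shortExactSeq hA hI.1 hW hec,
      mem_fEpi_of_shortExactSeq hB (hCsum _ _ hI.1 hZ) hW hd,
      mem_fEpi_of_shortExactSeq hZ hZ (hC0 (ModuleCat.of Λ PUnit) inferInstance)
        (shortExactSeq_id_zero Z (ModuleCat.of Λ PUnit)),
      .of_shortExact (ShortComplex.Splitting.ofHasBinaryBiproduct I Z).shortExact,
      shortExactSeq_id_zero W (ModuleCat.of Λ PUnit)⟩
  have hlas := arrowLeftAlmostSplit_arrowHomInl hCext hfg hfl hI hec henv he' hd₂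
  exact ⟨hconfl, hlas.1, hlas,
    arrowRightAlmostSplit_arrowHomSnd hCext hfg.comp_eq_zero hf hgr hI hec he' hd₂⟩
end

section
/- Let f : X₁ → X₂, g : Y₁ → Y₂, h : Z₁ → Z₂ be morphisms in A and let (φ₁, φ₂) : f → g and (ψ₁, ψ₂) : g → h be arrow morphisms such that for i = 1, 2 the sequence X_i → Y_i → Z_i given by φ_i and ψ_i is split exact, i.e., there is an isomorphism θ_i : Y_i → X_i ⊕ Z_i with θ_i ∘ φ_i = inl and pr₂ ∘ θ_i = ψ_i. Then there exists a morphism q : Z₁ → X₂ and an isomorphism of arrows (θ₁′, θ₂′) : g → M(f,q,h) such that (θ₁′, θ₂′) ∘ (φ₁, φ₂) = (inl, inl) and (pr₂, pr₂) ∘ (θ₁′, θ₂′) = (ψ₁, ψ₂); that is, every cw-exact (degreewise split exact) sequence in the morphism category H(A) from f to h is isomorphic to the triangular-matrix sequence δ(f,q,h) for some q : Z₁ → X₂. -/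
open CategoryTheory CategoryTheory.Limits

universe v u

variable {A : Type u} [Category.{v} A] [Preadditive A] [HasBinaryBiproducts A]

/-- The morphism `A₁ ⊞ B₁ ⟶ A₂ ⊞ B₂` with matrix entries `a, c, 0, b`. -/
noncomputable def matMor {A₁ A₂ B₁ B₂ : A} (a : A₁ ⟶ A₂) (c : B₁ ⟶ A₂) (b : B₁ ⟶ B₂) :
    (A₁ ⊞ B₁ : A) ⟶ (A₂ ⊞ B₂ : A) :=
  biprod.desc (a ≫ biprod.inl) (c ≫ biprod.inl + b ≫ biprod.inr)

/-- The inclusion arrow morphism `(inl, inl) : a → M(a,c,b)` of the cw-exact sequence. -/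
noncomputable def incMor {A₁ A₂ B₁ B₂ : A} (a : A₁ ⟶ A₂) (c : B₁ ⟶ A₂) (b : B₁ ⟶ B₂) :
    Arrow.mk a ⟶ Arrow.mk (matMor a c b) :=
  Arrow.homMk (u := biprod.inl) (v := biprod.inl) (by simp [matMor])

/-- The projection arrow morphism `(pr₂, pr₂) : M(a,c,b) → b` of the cw-exact sequence. -/
noncomputable def prjMor {A₁ A₂ B₁ B₂ : A} (a : A₁ ⟶ A₂) (c : B₁ ⟶ A₂) (b : B₁ ⟶ B₂) :
    Arrow.mk (matMor a c b) ⟶ Arrow.mk b :=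
  Arrow.homMk (u := biprod.snd) (v := biprod.snd)
    (by apply biprod.hom_ext' <;> simp [matMor])

/-- `Htp(a,b)`: the morphisms `B₁ ⟶ A₂` of the form `a ∘ s + t ∘ b`. -/
def Htp {A₁ A₂ B₁ B₂ : A} (a : A₁ ⟶ A₂) (b : B₁ ⟶ B₂) (x : B₁ ⟶ A₂) : Prop :=
  ∃ (s : B₁ ⟶ A₁) (t : B₂ ⟶ A₂), x = s ≫ a + b ≫ t

/-- An isomorphism of cw-exact sequences `δ(a,c,b) ≅ δ(a,c′,b)`. -/
noncomputable def SeqIso {A₁ A₂ B₁ B₂ : A} (a : A₁ ⟶ A₂) (c c' : B₁ ⟶ A₂) (b : B₁ ⟶ B₂) :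
    Prop :=
  ∃ (α : Arrow.mk a ≅ Arrow.mk a) (φ : Arrow.mk (matMor a c b) ≅ Arrow.mk (matMor a c' b))
    (β : Arrow.mk b ≅ Arrow.mk b),
    incMor a c b ≫ φ.hom = α.hom ≫ incMor a c' b ∧
    prjMor a c b ≫ β.hom = φ.hom ≫ prjMor a c' b

/-- **Statement 19.** Every cw-exact (degreewise split exact) sequence in the morphism
category from `f` to `h` is isomorphic to the triangular-matrix sequence `δ(f,q,h)` for some
`q : Z₁ ⟶ X₂`. -/
theorem cw_exact_iso_triangular {A : Type u} [Category.{v} A] [Preadditive A]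
    [HasBinaryBiproducts A]
    {X₁ X₂ Y₁ Y₂ Z₁ Z₂ : A} (f : X₁ ⟶ X₂) (g : Y₁ ⟶ Y₂) (h : Z₁ ⟶ Z₂)
    (φ : Arrow.mk f ⟶ Arrow.mk g) (ψ : Arrow.mk g ⟶ Arrow.mk h)
    (θ₁ : Y₁ ≅ (X₁ ⊞ Z₁ : A)) (θ₂ : Y₂ ≅ (X₂ ⊞ Z₂ : A))
    (h₁ : φ.left ≫ θ₁.hom = biprod.inl) (h₁' : θ₁.hom ≫ biprod.snd = ψ.left)
    (h₂ : φ.right ≫ θ₂.hom = biprod.inl) (h₂' : θ₂.hom ≫ biprod.snd = ψ.right) :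
    ∃ (q : Z₁ ⟶ X₂) (θ : Arrow.mk g ≅ Arrow.mk (matMor f q h)),
      φ ≫ θ.hom = incMor f q h ∧ θ.hom ≫ prjMor f q h = ψ := by
  set q : Z₁ ⟶ X₂ := biprod.inr ≫ θ₁.inv ≫ g ≫ θ₂.hom ≫ biprod.fst with hq
  have hinl : biprod.inl ≫ θ₁.inv = φ.left := by
    have : (φ.left ≫ θ₁.hom) ≫ θ₁.inv = φ.left := by
      rw [Category.assoc, Iso.hom_inv_id, Category.comp_id]
    rw [h₁] at this; exact this
  have hwφ : φ.left ≫ g = f ≫ φ.right := by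
    have := φ.w; simpa using this
  have hwψ : ψ.left ≫ h = g ≫ ψ.right := by
    have := ψ.w; simpa using this
  have key : θ₁.inv ≫ g ≫ θ₂.hom = matMor f q h := by
    apply biprod.hom_ext'
    · rw [← Category.assoc, hinl, ← Category.assoc, hwφ, Category.assoc, h₂]
      simp [matMor]
    · apply biprod.hom_ext
      · simp [matMor, hq]
      · simp only [Category.assoc]
        rw [h₂', ← hwψ, ← h₁']
        simp [matMor]
  refine ⟨q, Arrow.isoMk θ₁ θ₂ ?_, ?_, ?_⟩
  · simp only [Arrow.mk_left, Arrow.mk_right, Arrow.mk_hom]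
    rw [← key]; simp
  · ext
    · simp [incMor, h₁]
    · simp [incMor, h₂]
  · ext
    · simp [prjMor, h₁']
    · simp [prjMor, h₂']
end
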